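/- arXiv:0911.3978 — 7 statements merged into one kernel-verified Lean document; each statement's English description precedes it below -/
import Mathlib

section
/- Let V be a two-dimensional real inner product space, let e ∈ V be a unit vector, and let α, β, γ, δ be real numbers. For u ∈ V write u₀ = ⟨u,e⟩e and u₁ = u − u₀, and similarly w₀, w₁ for w ∈ V. Then the inequality α‖u₀‖²‖w₀‖² + β‖u₀‖²‖w₁‖² + γ‖u₁‖²‖w₀‖² + δ‖u₁‖²‖w₁‖² ≤ 0 holds for all u, w ∈ V with ⟨u,w⟩ = 0 if and only if β ≤ 0, γ ≤ 0, and α + δ ≤ 2√(βγ). -/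
/-!
Write `a = ⟪u, e⟫`, `b = ω(e, u)`, `c = ⟪w, e⟫`, `d = ω(e, w)` with `ω` the area form of an
orientation, so that `‖u₀‖ = |a|`, `‖u₁‖ = |b|` and `⟪u, w⟫ = ac + bd`. For `ac + bd = 0` we have
`(ac)² = (bd)² = -(ad)(bc)`, so the form equals `βx² + (α + δ)xy + γy²` with `x = |ad|`, `y = |bc|`,
and every point of the closed quadrant arises this way. Writing `β = -B²`, `γ = -G²`, that
quadratic form is `-(Bx - Gy)² + (α + δ - 2BG)xy`, which is nonpositive on the quadrant exactly
when `α + δ ≤ 2BG = 2√(βγ)`.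
-/

open RealInnerProductSpace Module

theorem forall_mul_mul_le_sq_add_sq_iff {B G s : ℝ} (hB : 0 ≤ B) (hG : 0 ≤ G) :
    (∀ x y : ℝ, 0 ≤ x → 0 ≤ y → s * x * y ≤ B ^ 2 * x ^ 2 + G ^ 2 * y ^ 2) ↔
      s ≤ 2 * B * G := by
  refine ⟨fun h => ?_, fun hs x y hx hy => ?_⟩
  · by_contra! hs
    have hs0 : 0 < s := lt_of_le_of_lt (by positivity) hs
    -- if `B` or `G` vanishes, `2BG` is only an infimum of `(B²x² + G²y²)/(xy)`, not attained
    rcases hB.eq_or_lt with rfl | hB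
    · have := h (G ^ 2 + 1) s (by positivity) hs0.le
      nlinarith
    rcases hG.eq_or_lt with rfl | hG
    · have := h s (B ^ 2 + 1) hs0.le (by positivity)
      nlinarith
    have := h G B hG.le hB.le
    nlinarith [mul_pos hB hG]
  · nlinarith [sq_nonneg (B * x - G * y), mul_le_mul_of_nonneg_right hs (mul_nonneg hx hy)]

theorem Real.sqrt_mul_of_nonpos {x : ℝ} (hx : x ≤ 0) (y : ℝ) :
    √(x * y) = √(-x) * √(-y) := by
  rw [← Real.sqrt_mul (neg_nonneg.mpr hx), neg_mul_neg]

theorem quadratic_nonpos_on_nonneg_quadrant_iff (β γ s : ℝ) :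
    (∀ x y : ℝ, 0 ≤ x → 0 ≤ y → β * x ^ 2 + s * x * y + γ * y ^ 2 ≤ 0) ↔
      β ≤ 0 ∧ γ ≤ 0 ∧ s ≤ 2 * √(β * γ) := by
  have iff_of_nonpos : β ≤ 0 → γ ≤ 0 →
      ((∀ x y : ℝ, 0 ≤ x → 0 ≤ y → β * x ^ 2 + s * x * y + γ * y ^ 2 ≤ 0) ↔
        s ≤ 2 * √(β * γ)) := by
    intro hβ hγ
    rw [Real.sqrt_mul_of_nonpos hβ, ← mul_assoc,
      ← forall_mul_mul_le_sq_add_sq_iff (Real.sqrt_nonneg _) (Real.sqrt_nonneg _),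
      Real.sq_sqrt (neg_nonneg.mpr hβ), Real.sq_sqrt (neg_nonneg.mpr hγ)]
    refine forall₄_congr fun x y _ _ => ?_
    constructor <;> intro h <;> linarith
  refine ⟨fun h => ?_, fun ⟨hβ, hγ, hs⟩ => (iff_of_nonpos hβ hγ).mpr hs⟩
  have hβ : β ≤ 0 := by simpa using h 1 0 zero_le_one le_rfl
  have hγ : γ ≤ 0 := by simpa using h 0 1 le_rfl zero_le_one
  exact ⟨hβ, hγ, (iff_of_nonpos hβ hγ).mp h⟩

theorem forall_orthogonal_quartic_nonpos_iff (α β γ δ : ℝ) :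
    (∀ a b c d : ℝ, a * c + b * d = 0 →
        α * a ^ 2 * c ^ 2 + β * a ^ 2 * d ^ 2 + γ * b ^ 2 * c ^ 2 + δ * b ^ 2 * d ^ 2 ≤ 0) ↔
      ∀ x y : ℝ, 0 ≤ x → 0 ≤ y → β * x ^ 2 + (α + δ) * x * y + γ * y ^ 2 ≤ 0 := by
  refine ⟨fun h x y hx hy => ?_, fun h a b c d hperp => ?_⟩
  · have := h (√x) (√y) (-√y) (√x) (by ring)
    rw [neg_sq, Real.sq_sqrt hx, Real.sq_sqrt hy] at this
    linarith
  · have hbd : b * d = -(a * c) := by linarith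
    have habs : |a * d| * |b * c| = (a * c) ^ 2 := by
      rw [← abs_mul, show a * d * (b * c) = a * c * (b * d) by ring, hbd]
      rw [mul_neg, abs_neg, abs_mul_self, sq]
    have := h |a * d| |b * c| (abs_nonneg _) (abs_nonneg _)
    rw [sq_abs, sq_abs, mul_assoc, habs] at this
    have hb2d2 : b ^ 2 * d ^ 2 = (a * c) ^ 2 := by rw [← mul_pow, hbd, neg_sq]
    rw [mul_assoc δ, hb2d2]
    linarith

theorem norm_sub_inner_smul_sq_of_norm_eq_one {V : Type*} [NormedAddCommGroup V]
    [InnerProductSpace ℝ V] {e : V} (he : ‖e‖ = 1) (u : V) :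
    ‖u - ⟪u, e⟫ • e‖ ^ 2 = ‖u‖ ^ 2 - ⟪u, e⟫ ^ 2 := by
  rw [norm_sub_sq_real, real_inner_smul_right, norm_smul, he, Real.norm_eq_abs]
  ring_nf
  rw [sq_abs]
  ring

namespace Orientation

variable {V : Type*} [NormedAddCommGroup V] [InnerProductSpace ℝ V] [Fact (finrank ℝ V = 2)]
  (o : Orientation ℝ V (Fin 2)) {e : V}

local notation "ω" => o.areaForm
local notation "J" => o.rightAngleRotation

theorem inner_eq_inner_mul_inner_add_areaForm_mul_areaForm (he : ‖e‖ = 1) (u w : V) :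
    ⟪u, w⟫ = ⟪u, e⟫ * ⟪w, e⟫ + ω e u * ω e w := by
  rw [real_inner_comm e u, real_inner_comm e w, o.inner_mul_inner_add_areaForm_mul_areaForm,
    he, one_pow, one_mul]

theorem norm_sub_inner_smul_sq (he : ‖e‖ = 1) (u : V) :
    ‖u - ⟪u, e⟫ • e‖ ^ 2 = ω e u ^ 2 := by
  have := o.inner_sq_add_areaForm_sq e u
  rw [he, one_pow, one_mul, real_inner_comm] at this
  rw [norm_sub_inner_smul_sq_of_norm_eq_one he]
  linarith

theorem forall_inner_eq_zero_iff (he : ‖e‖ = 1) {P : ℝ → ℝ → ℝ → ℝ → Prop} :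
    (∀ u w : V, ⟪u, w⟫ = 0 → P ⟪u, e⟫ (ω e u) ⟪w, e⟫ (ω e w)) ↔
      ∀ a b c d : ℝ, a * c + b * d = 0 → P a b c d := by
  refine ⟨fun h a b c d hperp => ?_, fun h u w hperp => h _ _ _ _ ?_⟩
  · have coords : ∀ x y : ℝ, ⟪x • e + y • J e, e⟫ = x ∧ ω e (x • e + y • J e) = y := by
      intro x y
      simp [inner_add_left, real_inner_smul_left, he, o.areaForm_apply_self,
        o.areaForm_rightAngleRotation_right]
    obtain ⟨hu₀, hu₁⟩ := coords a b
    obtain ⟨hw₀, hw₁⟩ := coords c d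
    have := h (a • e + b • J e) (c • e + d • J e)
      (by rw [o.inner_eq_inner_mul_inner_add_areaForm_mul_areaForm he, hu₀, hu₁, hw₀, hw₁, hperp])
    rwa [hu₀, hu₁, hw₀, hw₁] at this
  · rwa [← o.inner_eq_inner_mul_inner_add_areaForm_mul_areaForm he]

end Orientation

/-- Two-dimensional criterion for the weak Ma-Trudinger-Wang condition:
the quadratic-form inequality in the projections onto a unit vector `e`
holds for all orthogonal pairs `u, w` iff `β ≤ 0`, `γ ≤ 0` and
`α + δ ≤ 2√(βγ)`. -/
theorem stmt_0 {V : Type*} [NormedAddCommGroup V] [InnerProductSpace ℝ V]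
    (hdim : Module.finrank ℝ V = 2) (e : V) (he : ‖e‖ = 1) (α β γ δ : ℝ) :
    (∀ u w : V, ⟪u, w⟫ = 0 →
        α * ‖⟪u, e⟫ • e‖ ^ 2 * ‖⟪w, e⟫ • e‖ ^ 2 +
        β * ‖⟪u, e⟫ • e‖ ^ 2 * ‖w - ⟪w, e⟫ • e‖ ^ 2 +
        γ * ‖u - ⟪u, e⟫ • e‖ ^ 2 * ‖⟪w, e⟫ • e‖ ^ 2 +
        δ * ‖u - ⟪u, e⟫ • e‖ ^ 2 * ‖w - ⟪w, e⟫ • e‖ ^ 2 ≤ 0) ↔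
      (β ≤ 0 ∧ γ ≤ 0 ∧ α + δ ≤ 2 * Real.sqrt (β * γ)) := by
  have : Fact (finrank ℝ V = 2) := ⟨hdim⟩
  have : FiniteDimensional ℝ V := .of_fact_finrank_eq_two
  let o : Orientation ℝ V (Fin 2) := (Module.finBasisOfFinrankEq ℝ V hdim).orientation
  have hproj : ∀ u : V, ‖⟪u, e⟫ • e‖ ^ 2 = ⟪u, e⟫ ^ 2 := fun u => by
    rw [norm_smul, he, mul_one, Real.norm_eq_abs, sq_abs]
  simp only [hproj, o.norm_sub_inner_smul_sq he]
  rw [o.forall_inner_eq_zero_iff he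
      (P := fun a b c d => α * a ^ 2 * c ^ 2 + β * a ^ 2 * d ^ 2 + γ * b ^ 2 * c ^ 2 +
        δ * b ^ 2 * d ^ 2 ≤ 0),
    forall_orthogonal_quartic_nonpos_iff, quadratic_nonpos_on_nonneg_quadrant_iff]
end

section
/- Let V be a two-dimensional real inner product space, let e ∈ V be a unit vector, and let α, β, γ, δ be real numbers. For u ∈ V write u₀ = ⟨u,e⟩e and u₁ = u − u₀, and similarly w₀, w₁ for w ∈ V. Then the strict inequality α‖u₀‖²‖w₀‖² + β‖u₀‖²‖w₁‖² + γ‖u₁‖²‖w₀‖² + δ‖u₁‖²‖w₁‖² < 0 holds for all nonzero u, w ∈ V with ⟨u,w⟩ = 0 if and only if β < 0, γ < 0, and α + δ < 2√(βγ). -/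
/-!
In an oriented frame `(e, J e)` the map `u ↦ (⟪e, u⟫, ω e u)` identifies `V` isometrically with
`ℝ²`, and `‖u₀‖ = |⟪e, u⟫|`, `‖u₁‖ = |ω e u|`. For orthogonal coordinate pairs `(a, b) ⊥ (c, d)`
the expression equals the binary form `β x² + (α + δ) x y + γ y²` at `x = |a d|`, `y = |b c|`,
and every point of the closed quadrant arises this way. So the criterion is strict copositivity
of that form, which by AM-GM means `β, γ < 0` and `α + δ < 2 √(β γ)`.
-/

open RealInnerProductSpace Module

theorem quadratic_neg_on_nonneg_quadrant_iff {β s γ : ℝ} :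
    (∀ x y : ℝ, 0 ≤ x → 0 ≤ y → (x ≠ 0 ∨ y ≠ 0) → β * x ^ 2 + s * x * y + γ * y ^ 2 < 0) ↔
      β < 0 ∧ γ < 0 ∧ s < 2 * √(β * γ) := by
  constructor
  · intro h
    have hβ : β < 0 := by simpa using h 1 0 zero_le_one le_rfl (by norm_num)
    have hγ : γ < 0 := by simpa using h 0 1 le_rfl zero_le_one (by norm_num)
    refine ⟨hβ, hγ, ?_⟩
    have hpos : 0 < √(β * γ) := Real.sqrt_pos.mpr (mul_pos_of_neg_of_neg hβ hγ)
    have hsq : √(β * γ) ^ 2 = β * γ := Real.sq_sqrt (mul_pos_of_neg_of_neg hβ hγ).le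
    -- the equality case of AM-GM, where `x y = √(β γ)`
    have key := h √(-γ) √(-β) (Real.sqrt_nonneg _) (Real.sqrt_nonneg _)
      (Or.inl (Real.sqrt_ne_zero'.mpr (by linarith)))
    rw [mul_assoc, ← Real.sqrt_mul (by linarith), Real.sq_sqrt (by linarith),
      Real.sq_sqrt (by linarith), show -γ * -β = β * γ by ring] at key
    nlinarith
  · rintro ⟨hβ, hγ, hs⟩ x y hx hy hxy
    have hp : √(-β) ^ 2 = -β := Real.sq_sqrt (by linarith)
    have hq : √(-γ) ^ 2 = -γ := Real.sq_sqrt (by linarith)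
    have hpq : √(β * γ) = √(-β) * √(-γ) := by
      rw [← Real.sqrt_mul (by linarith), neg_mul_neg]
    rcases (mul_nonneg hx hy).eq_or_lt' with hxy0 | hxy0
    · rcases mul_eq_zero.mp hxy0 with rfl | rfl
      · have : y ≠ 0 := by simpa using hxy
        nlinarith [pow_pos (hy.lt_of_ne' this) 2]
      · have : x ≠ 0 := by simpa using hxy
        nlinarith [pow_pos (hx.lt_of_ne' this) 2]
    · calc β * x ^ 2 + s * x * y + γ * y ^ 2
          = -(√(-β) * x - √(-γ) * y) ^ 2 + (s - 2 * √(β * γ)) * (x * y) := by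
            rw [hpq]; linear_combination x ^ 2 * hp + y ^ 2 * hq
        _ < 0 := by nlinarith [sq_nonneg (√(-β) * x - √(-γ) * y)]

theorem neg_on_orthogonal_pairs_iff {α β γ δ : ℝ} :
    (∀ a b c d : ℝ, (a ≠ 0 ∨ b ≠ 0) → (c ≠ 0 ∨ d ≠ 0) → a * c + b * d = 0 →
      α * a ^ 2 * c ^ 2 + β * a ^ 2 * d ^ 2 + γ * b ^ 2 * c ^ 2 + δ * b ^ 2 * d ^ 2 < 0) ↔
      β < 0 ∧ γ < 0 ∧ α + δ < 2 * √(β * γ) := by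
  rw [← quadratic_neg_on_nonneg_quadrant_iff]
  constructor
  · intro h x y hx hy hxy
    have hxy' : √x ≠ 0 ∨ √y ≠ 0 := by
      simpa [Real.sqrt_eq_zero hx, Real.sqrt_eq_zero hy] using hxy
    have := h √x √y (-√y) √x hxy' (by rw [neg_ne_zero]; exact hxy'.symm) (by ring)
    rw [neg_sq, Real.sq_sqrt hx, Real.sq_sqrt hy] at this
    linarith
  · intro h a b c d hab hcd horth
    have hxy : |a * d| * |b * c| = (a * c) ^ 2 := by
      rw [← abs_mul, show a * d * (b * c) = -(a * c) ^ 2 by linear_combination (a * c) * horth,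
        abs_neg, abs_sq]
    have hne : a * d ≠ 0 ∨ b * c ≠ 0 := by
      by_contra! h0
      obtain ⟨had, hbc⟩ := h0
      rcases hab with ha | hb
      · have hd : d = 0 := (mul_eq_zero.mp had).resolve_left ha
        have hc : c ≠ 0 := by simpa [hd] using hcd
        simp [hd, ha, hc] at horth
      · have hc : c = 0 := (mul_eq_zero.mp hbc).resolve_left hb
        have hd : d ≠ 0 := by simpa [hc] using hcd
        simp [hd, hb, hc] at horth
    have := h |a * d| |b * c| (abs_nonneg _) (abs_nonneg _) (by simpa using hne)
    rw [mul_assoc, hxy, sq_abs, sq_abs] at this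
    linear_combination this + δ * (b * d - a * c) * horth

section

variable {V : Type*} [NormedAddCommGroup V] [InnerProductSpace ℝ V] {e : V}

theorem norm_inner_smul_sq_of_norm_eq_one (he : ‖e‖ = 1) (v : V) :
    ‖⟪v, e⟫ • e‖ ^ 2 = ⟪e, v⟫ ^ 2 := by
  rw [norm_smul, he, mul_one, Real.norm_eq_abs, sq_abs, real_inner_comm]

variable [Fact (finrank ℝ V = 2)] (o : Orientation ℝ V (Fin 2))

local notation "ω" => o.areaForm
local notation "J" => o.rightAngleRotation

namespace Orientation

theorem norm_sub_inner_smul_sq_of_norm_eq_one (he : ‖e‖ = 1) (v : V) :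
    ‖v - ⟪v, e⟫ • e‖ ^ 2 = ω e v ^ 2 := by
  have h := o.inner_sq_add_areaForm_sq e v
  rw [he, one_pow, one_mul] at h
  rw [norm_sub_sq_real, real_inner_smul_right, norm_inner_smul_sq_of_norm_eq_one he,
    real_inner_comm]
  linear_combination -h

theorem inner_eq_of_norm_eq_one (he : ‖e‖ = 1) (u w : V) :
    ⟪u, w⟫ = ⟪e, u⟫ * ⟪e, w⟫ + ω e u * ω e w := by
  rw [o.inner_mul_inner_add_areaForm_mul_areaForm, he, one_pow, one_mul]

theorem ne_zero_iff_of_norm_eq_one (he : ‖e‖ = 1) {v : V} :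
    v ≠ 0 ↔ ⟪e, v⟫ ≠ 0 ∨ ω e v ≠ 0 := by
  have h := o.inner_sq_add_areaForm_sq e v
  rw [he, one_pow, one_mul] at h
  rw [Ne, ← norm_eq_zero, ← sq_eq_zero_iff, ← h, sq, sq, mul_self_add_mul_self_eq_zero, not_and_or]

theorem exists_inner_eq_areaForm_eq (he : ‖e‖ = 1) (a b : ℝ) :
    ∃ v : V, ⟪e, v⟫ = a ∧ ω e v = b :=
  ⟨a • e + b • J e, by simp [inner_add_right, real_inner_smul_right, he], by simp [he]⟩

end Orientation

end

/-- Two-dimensional criterion for the strong Ma-Trudinger-Wang condition: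
the strict quadratic-form inequality in the projections onto a unit vector `e`
holds for all nonzero orthogonal pairs `u, w` iff `β < 0`, `γ < 0` and
`α + δ < 2√(βγ)`. -/
theorem stmt_1 {V : Type*} [NormedAddCommGroup V] [InnerProductSpace ℝ V]
    (hdim : Module.finrank ℝ V = 2) (e : V) (he : ‖e‖ = 1) (α β γ δ : ℝ) :
    (∀ u w : V, u ≠ 0 → w ≠ 0 → ⟪u, w⟫ = 0 →
        α * ‖⟪u, e⟫ • e‖ ^ 2 * ‖⟪w, e⟫ • e‖ ^ 2 +
        β * ‖⟪u, e⟫ • e‖ ^ 2 * ‖w - ⟪w, e⟫ • e‖ ^ 2 +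
        γ * ‖u - ⟪u, e⟫ • e‖ ^ 2 * ‖⟪w, e⟫ • e‖ ^ 2 +
        δ * ‖u - ⟪u, e⟫ • e‖ ^ 2 * ‖w - ⟪w, e⟫ • e‖ ^ 2 < 0) ↔
      (β < 0 ∧ γ < 0 ∧ α + δ < 2 * Real.sqrt (β * γ)) := by
  have : Fact (finrank ℝ V = 2) := ⟨hdim⟩
  have : FiniteDimensional ℝ V := .of_fact_finrank_eq_two
  let o : Orientation ℝ V (Fin 2) := (Module.finBasisOfFinrankEq ℝ V hdim).orientation
  simp only [norm_inner_smul_sq_of_norm_eq_one he, o.norm_sub_inner_smul_sq_of_norm_eq_one he]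
  rw [← neg_on_orthogonal_pairs_iff]
  constructor
  · intro h a b c d hab hcd horth
    obtain ⟨u, rfl, rfl⟩ := o.exists_inner_eq_areaForm_eq he a b
    obtain ⟨w, rfl, rfl⟩ := o.exists_inner_eq_areaForm_eq he c d
    exact h u w ((o.ne_zero_iff_of_norm_eq_one he).2 hab)
      ((o.ne_zero_iff_of_norm_eq_one he).2 hcd) (by rwa [o.inner_eq_of_norm_eq_one he])
  · intro h u w hu hw huw
    rw [o.inner_eq_of_norm_eq_one he] at huw
    exact h _ _ _ _ ((o.ne_zero_iff_of_norm_eq_one he).1 hu)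
      ((o.ne_zero_iff_of_norm_eq_one he).1 hw) huw
end

section
/- Let V be a finite-dimensional real inner product space of dimension at least 3, let e ∈ V be a unit vector, and let α, β, γ, δ be real numbers. For u ∈ V write u₀ = ⟨u,e⟩e and u₁ = u − u₀, and similarly w₀, w₁ for w ∈ V. Then the inequality α‖u₀‖²‖w₀‖² + β‖u₀‖²‖w₁‖² + γ‖u₁‖²‖w₀‖² + δ‖u₁‖²‖w₁‖² ≤ 0 holds for all u, w ∈ V with ⟨u,w⟩ = 0 if and only if β ≤ 0, γ ≤ 0, δ ≤ 0, and α + δ ≤ 2√(βγ). -/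
/-!
Writing `a = ⟨u,e⟩`, `c = ⟨w,e⟩`, orthogonality of `u, w` gives `⟨u₁,w₁⟩ = -ac`, so by
Cauchy–Schwarz `‖u₀‖²‖w₀‖² ≤ ‖u₁‖²‖w₁‖²`; together with AM–GM on the two mixed terms this proves
sufficiency. For necessity, in dimension `≥ 3` there are orthonormal `f, g ⊥ e`: the pair
`(f, g)` gives `δ ≤ 0`, and the pairs `(p e + q f, -q e + p f)` give
`β p⁴ + (α + δ) p²q² + γ q⁴ ≤ 0`, which forces the remaining conditions.
-/

open RealInnerProductSpace

lemma nonpos_of_forall_mul_le {ε c : ℝ} (h : ∀ x : ℝ, 0 ≤ x → ε * x ≤ c) : ε ≤ 0 := by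
  by_contra! hε
  have := h ((|c| + 1) / ε) (by positivity)
  rw [mul_div_cancel₀ _ hε.ne'] at this
  linarith [le_abs_self c]

lemma le_two_mul_sqrt_mul_of_forall {ε β γ : ℝ} (hβ : β ≤ 0) (hγ : γ ≤ 0)
    (h : ∀ x y : ℝ, 0 ≤ x → 0 ≤ y → ε * x * y + β * x ^ 2 + γ * y ^ 2 ≤ 0) :
    ε ≤ 2 * √(β * γ) := by
  rcases (Real.sqrt_nonneg (β * γ)).eq_or_lt with hs | hs
  · have hβγ : β = 0 ∨ γ = 0 := by
      rw [← mul_eq_zero]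
      nlinarith [Real.sqrt_eq_zero'.mp hs.symm, mul_nonneg_of_nonpos_of_nonpos hβ hγ]
    rw [← hs, mul_zero]
    rcases hβγ with rfl | rfl
    · exact nonpos_of_forall_mul_le (c := -γ) fun x hx => by nlinarith [h x 1 hx zero_le_one]
    · exact nonpos_of_forall_mul_le (c := -β) fun y hy => by nlinarith [h 1 y zero_le_one hy]
  · -- evaluate at the point where the two squares balance
    have key := h √(-γ) √(-β) (Real.sqrt_nonneg _) (Real.sqrt_nonneg _)
    rw [mul_assoc, ← Real.sqrt_mul (neg_nonneg.mpr hγ), neg_mul_neg, mul_comm γ,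
      Real.sq_sqrt (neg_nonneg.mpr hγ), Real.sq_sqrt (neg_nonneg.mpr hβ)] at key
    nlinarith [Real.sq_sqrt (mul_nonneg_of_nonpos_of_nonpos hβ hγ)]

lemma form_nonpos_of_mul_le_mul {α β γ δ A B P Q : ℝ} (hA : 0 ≤ A) (hB : 0 ≤ B)
    (hP : 0 ≤ P) (hQ : 0 ≤ Q) (hAB : A * B ≤ P * Q)
    (hβ : β ≤ 0) (hγ : γ ≤ 0) (hδ : δ ≤ 0) (hαδ : α + δ ≤ 2 * √(β * γ)) :
    α * A * B + β * A * Q + γ * P * B + δ * P * Q ≤ 0 := by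
  set s := √(β * γ)
  have hs : s ^ 2 = β * γ := Real.sq_sqrt (mul_nonneg_of_nonpos_of_nonpos hβ hγ)
  have hx : 0 ≤ -β * A * Q := by have := neg_nonneg.mpr hβ; positivity
  have hy : 0 ≤ -γ * P * B := by have := neg_nonneg.mpr hγ; positivity
  have hsAB : 0 ≤ s * (A * B) := by positivity
  -- AM–GM, using `A Q · P B = A B · P Q ≥ (A B)²`
  have amgm : 2 * s * (A * B) ≤ -β * A * Q + -γ * P * B := by
    have hsq : (2 * s * (A * B)) ^ 2 ≤ (-β * A * Q + -γ * P * B) ^ 2 := by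
      have hxy : -β * A * Q * (-γ * P * B) = s ^ 2 * (A * B) * (P * Q) := by rw [hs]; ring
      nlinarith [sq_nonneg (-β * A * Q - -γ * P * B),
        mul_le_mul_of_nonneg_left hAB (mul_nonneg (sq_nonneg s) (mul_nonneg hA hB))]
    nlinarith
  nlinarith [mul_le_mul_of_nonpos_left hAB hδ, mul_le_mul_of_nonneg_right hαδ (mul_nonneg hA hB)]

section InnerProduct

variable {V : Type*} [NormedAddCommGroup V] [InnerProductSpace ℝ V]

def projForm (α β γ δ : ℝ) (e u w : V) : ℝ :=
  α * ‖⟪u, e⟫ • e‖ ^ 2 * ‖⟪w, e⟫ • e‖ ^ 2 +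
  β * ‖⟪u, e⟫ • e‖ ^ 2 * ‖w - ⟪w, e⟫ • e‖ ^ 2 +
  γ * ‖u - ⟪u, e⟫ • e‖ ^ 2 * ‖⟪w, e⟫ • e‖ ^ 2 +
  δ * ‖u - ⟪u, e⟫ • e‖ ^ 2 * ‖w - ⟪w, e⟫ • e‖ ^ 2

lemma norm_smul_unit_sq {e : V} (he : ‖e‖ = 1) (t : ℝ) : ‖t • e‖ ^ 2 = t ^ 2 := by
  rw [norm_smul, he, mul_one, Real.norm_eq_abs, sq_abs]

lemma inner_smul_add_of_inner_eq_zero {e v : V} (he : ‖e‖ = 1) (hv : ⟪v, e⟫ = 0) (p : ℝ) :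
    ⟪p • e + v, e⟫ = p := by
  rw [inner_add_left, inner_smul_left, real_inner_self_eq_norm_sq, he, hv]
  simp

lemma projForm_smul_add {e v z : V} (he : ‖e‖ = 1) (hv : ⟪v, e⟫ = 0) (hz : ⟪z, e⟫ = 0)
    (α β γ δ p r : ℝ) :
    projForm α β γ δ e (p • e + v) (r • e + z) =
      α * p ^ 2 * r ^ 2 + β * p ^ 2 * ‖z‖ ^ 2 + γ * ‖v‖ ^ 2 * r ^ 2 + δ * ‖v‖ ^ 2 * ‖z‖ ^ 2 := by
  simp only [projForm, inner_smul_add_of_inner_eq_zero he hv,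
    inner_smul_add_of_inner_eq_zero he hz, add_sub_cancel_left, norm_smul_unit_sq he]

lemma sq_inner_mul_inner_le_of_inner_eq_zero {e u w : V} (he : ‖e‖ = 1) (huw : ⟪u, w⟫ = 0) :
    (⟪u, e⟫ * ⟪w, e⟫) ^ 2 ≤ ‖u - ⟪u, e⟫ • e‖ ^ 2 * ‖w - ⟪w, e⟫ • e‖ ^ 2 := by
  have h : ⟪u - ⟪u, e⟫ • e, w - ⟪w, e⟫ • e⟫ = -(⟪u, e⟫ * ⟪w, e⟫) := by
    simp only [inner_sub_left, inner_sub_right, inner_smul_left, inner_smul_right,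
      real_inner_self_eq_norm_sq, he, huw, real_inner_comm e, RCLike.conj_to_real]
    ring
  have := real_inner_mul_inner_self_le (u - ⟪u, e⟫ • e) (w - ⟪w, e⟫ • e)
  rw [h, real_inner_self_eq_norm_sq, real_inner_self_eq_norm_sq] at this
  linarith

lemma projForm_nonpos {e : V} (he : ‖e‖ = 1) {α β γ δ : ℝ} (hβ : β ≤ 0) (hγ : γ ≤ 0)
    (hδ : δ ≤ 0) (hαδ : α + δ ≤ 2 * √(β * γ)) {u w : V} (huw : ⟪u, w⟫ = 0) :
    projForm α β γ δ e u w ≤ 0 := by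
  refine form_nonpos_of_mul_le_mul (by positivity) (by positivity) (by positivity)
    (by positivity) ?_ hβ hγ hδ hαδ
  rw [norm_smul_unit_sq he, norm_smul_unit_sq he, ← mul_pow]
  exact sq_inner_mul_inner_le_of_inner_eq_zero he huw

end InnerProduct

lemma exists_orthonormal_pair_orthogonal {V : Type*} [NormedAddCommGroup V]
    [InnerProductSpace ℝ V] [FiniteDimensional ℝ V] (hdim : 3 ≤ Module.finrank ℝ V) (e : V) :
    ∃ f g : V, ‖f‖ = 1 ∧ ‖g‖ = 1 ∧ ⟪f, g⟫ = 0 ∧ ⟪f, e⟫ = 0 ∧ ⟪g, e⟫ = 0 := by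
  have hspan : Module.finrank ℝ (ℝ ∙ e) ≤ 1 := by
    simpa using finrank_span_le_card (R := ℝ) ({e} : Set V)
  have hK : 2 ≤ Module.finrank ℝ (ℝ ∙ e)ᗮ := by
    have := Submodule.finrank_add_finrank_orthogonal (ℝ ∙ e); omega
  let b := stdOrthonormalBasis ℝ (ℝ ∙ e)ᗮ
  let i : Fin (Module.finrank ℝ (ℝ ∙ e)ᗮ) := ⟨0, by omega⟩
  let j : Fin (Module.finrank ℝ (ℝ ∙ e)ᗮ) := ⟨1, by omega⟩
  have hperp (k) : ⟪(b k : V), e⟫ = 0 :=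
    Submodule.mem_orthogonal_singleton_iff_inner_left.mp (b k).2
  exact ⟨b i, b j, b.orthonormal.1 i, b.orthonormal.1 j,
    b.orthonormal.2 (by simp [i, j]), hperp i, hperp j⟩

/-- Higher-dimensional criterion for the weak Ma-Trudinger-Wang condition:
in dimension at least three, the quadratic-form inequality in the projections
onto a unit vector `e` holds for all orthogonal pairs `u, w` iff `β ≤ 0`,
`γ ≤ 0`, `δ ≤ 0` and `α + δ ≤ 2√(βγ)`. -/
theorem stmt_2 {V : Type*} [NormedAddCommGroup V] [InnerProductSpace ℝ V]
    [FiniteDimensional ℝ V] (hdim : 3 ≤ Module.finrank ℝ V)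
    (e : V) (he : ‖e‖ = 1) (α β γ δ : ℝ) :
    (∀ u w : V, ⟪u, w⟫ = 0 →
        α * ‖⟪u, e⟫ • e‖ ^ 2 * ‖⟪w, e⟫ • e‖ ^ 2 +
        β * ‖⟪u, e⟫ • e‖ ^ 2 * ‖w - ⟪w, e⟫ • e‖ ^ 2 +
        γ * ‖u - ⟪u, e⟫ • e‖ ^ 2 * ‖⟪w, e⟫ • e‖ ^ 2 +
        δ * ‖u - ⟪u, e⟫ • e‖ ^ 2 * ‖w - ⟪w, e⟫ • e‖ ^ 2 ≤ 0) ↔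
      (β ≤ 0 ∧ γ ≤ 0 ∧ δ ≤ 0 ∧ α + δ ≤ 2 * Real.sqrt (β * γ)) := by
  refine ⟨fun H => ?_, fun ⟨hβ, hγ, hδ, hαδ⟩ u w huw => projForm_nonpos he hβ hγ hδ hαδ huw⟩
  obtain ⟨f, g, hf, hg, hfg, hfe, hge⟩ := exists_orthonormal_pair_orthogonal hdim e
  have hδ : δ ≤ 0 := by
    have := H ((0 : ℝ) • e + f) ((0 : ℝ) • e + g) (by simpa using hfg)
    rw [← projForm, projForm_smul_add he hfe hge, hf, hg] at this
    simpa using this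
  have hpair (p q : ℝ) : (α + δ) * p ^ 2 * q ^ 2 + β * (p ^ 2) ^ 2 + γ * (q ^ 2) ^ 2 ≤ 0 := by
    have horth : ⟪p • e + q • f, -q • e + p • f⟫ = 0 := by
      simp only [inner_add_left, inner_add_right, real_inner_smul_left, real_inner_smul_right,
        real_inner_self_eq_norm_sq, he, hf, hfe, real_inner_comm f e]
      ring
    have := H _ _ horth
    rw [← projForm, projForm_smul_add he (by simp [real_inner_smul_left, hfe])
      (by simp [real_inner_smul_left, hfe]), norm_smul_unit_sq hf, norm_smul_unit_sq hf] at this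
    linarith
  have hβ : β ≤ 0 := by simpa using hpair 1 0
  have hγ : γ ≤ 0 := by simpa using hpair 0 1
  refine ⟨hβ, hγ, hδ, le_two_mul_sqrt_mul_of_forall hβ hγ ?_⟩
  intro x y hx hy
  simpa [Real.sq_sqrt hx, Real.sq_sqrt hy] using hpair √x √y
end

section
/- Let V be a real inner product space and let u, v, w ∈ V with v ≠ 0. For s near 0 let u₀(s) = (⟨u, v+s·w⟩/‖v+s·w‖²)(v+s·w) be the orthogonal projection of u onto the line spanned by v + s·w, and write u₀ = u₀(0), u₁ = u − u₀, w₀ = (⟨v,w⟩/‖v‖²)v, w₁ = w − w₀. Then the derivative of s ↦ ‖u₀(s)‖² at s = 0 equals 2⟨u₀,v⟩⟨u₁,w₁⟩/‖v‖². -/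
open RealInnerProductSpace

/-! Since `‖(⟪u, x⟫ / ‖x‖²) • x‖² = ⟪u, x⟫² / ‖x‖²`, the function to differentiate is the quotient
of `s ↦ ⟪u, v + s • w⟫²` and `s ↦ ‖v + s • w‖²`, whose derivatives at `0` are `2 ⟪u, v⟫ ⟪u, w⟫`
and `2 ⟪v, w⟫`. The quotient rule gives `2 ⟪u, v⟫ (⟪u, w⟫ - ⟪u, v⟫ ⟪v, w⟫ / ‖v‖²) / ‖v‖²`, and
the bracket is `⟪u₁, w₁⟫` while `⟪u, v⟫ = ⟪u₀, v⟫`. -/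

section

variable {V : Type*} [NormedAddCommGroup V] [InnerProductSpace ℝ V]

theorem norm_inner_div_norm_sq_smul_sq (u x : V) :
    ‖(⟪u, x⟫ / ‖x‖ ^ 2) • x‖ ^ 2 = ⟪u, x⟫ ^ 2 / ‖x‖ ^ 2 := by
  rcases eq_or_ne x 0 with rfl | hx
  · simp
  · have hx2 : ‖x‖ ^ 2 ≠ 0 := by positivity
    rw [norm_smul, mul_pow, Real.norm_eq_abs, sq_abs]
    field_simp

theorem inner_inner_div_norm_sq_smul_self (u : V) {v : V} (hv : v ≠ 0) :
    ⟪(⟪u, v⟫ / ‖v‖ ^ 2) • v, v⟫ = ⟪u, v⟫ := by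
  have hv2 : ‖v‖ ^ 2 ≠ 0 := by positivity
  rw [real_inner_smul_left, real_inner_self_eq_norm_sq]
  field_simp

theorem inner_sub_inner_div_norm_sq_smul (u w : V) {v : V} (hv : v ≠ 0) :
    ⟪u - (⟪u, v⟫ / ‖v‖ ^ 2) • v, w - (⟪v, w⟫ / ‖v‖ ^ 2) • v⟫ =
      ⟪u, w⟫ - ⟪u, v⟫ * ⟪v, w⟫ / ‖v‖ ^ 2 := by
  have hv2 : ‖v‖ ^ 2 ≠ 0 := by positivity
  simp only [inner_sub_left, inner_sub_right, real_inner_smul_left, real_inner_smul_right,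
    real_inner_self_eq_norm_sq, real_inner_comm v u]
  field_simp
  ring

theorem hasDerivAt_inner_sq_div_norm_sq_line (u w : V) {v : V} (hv : v ≠ 0) :
    HasDerivAt (fun s : ℝ => ⟪u, v + s • w⟫ ^ 2 / ‖v + s • w‖ ^ 2)
      (2 * ⟪u, v⟫ * (⟪u, w⟫ - ⟪u, v⟫ * ⟪v, w⟫ / ‖v‖ ^ 2) / ‖v‖ ^ 2) 0 := by
  have hline : HasDerivAt (fun s : ℝ => v + s • w) w 0 := by
    simpa using ((hasDerivAt_id (0 : ℝ)).smul_const w).const_add v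
  have hnum := ((hasDerivAt_const (0 : ℝ) u).inner ℝ hline).fun_pow 2
  have hden := hline.norm_sq
  have hv2 : ‖v‖ ^ 2 ≠ 0 := by positivity
  refine (hnum.fun_div hden (by simpa using hv2)).congr_deriv ?_
  simp only [zero_smul, add_zero, inner_zero_left]
  field_simp
  ring

end

/-- For `v ≠ 0`, let `u₀(s)` be the orthogonal projection of `u` onto the line
spanned by `v + s w`. Writing `u₀ = u₀(0)`, `u₁ = u - u₀` and
`w₁ = w - (⟨v,w⟫/‖v‖²) v`, the derivative of `s ↦ ‖u₀(s)‖²` at `s = 0` is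
`2 ⟨u₀,v⟩ ⟨u₁,w₁⟩ / ‖v‖²`. -/
theorem stmt_7 {V : Type*} [NormedAddCommGroup V] [InnerProductSpace ℝ V]
    (u v w : V) (hv : v ≠ 0) :
    deriv (fun s : ℝ =>
        ‖(⟪u, v + s • w⟫ / ‖v + s • w‖ ^ 2) • (v + s • w)‖ ^ 2) 0 =
      2 * ⟪(⟪u, v⟫ / ‖v‖ ^ 2) • v, v⟫ *
        ⟪u - (⟪u, v⟫ / ‖v‖ ^ 2) • v, w - (⟪v, w⟫ / ‖v‖ ^ 2) • v⟫ / ‖v‖ ^ 2 := by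
  simp only [norm_inner_div_norm_sq_smul_sq, inner_inner_div_norm_sq_smul_self u hv,
    inner_sub_inner_div_norm_sq_smul u w hv]
  exact (hasDerivAt_inner_sq_div_norm_sq_line u w hv).deriv
end

section
/- Let V be a real inner product space and let u, v, w ∈ V with v ≠ 0. For s near 0 let u₀(s) = (⟨u, v+s·w⟩/‖v+s·w‖²)(v+s·w) be the orthogonal projection of u onto the line spanned by v + s·w, and write u₀ = u₀(0), u₁ = u − u₀, w₀ = (⟨v,w⟩/‖v‖²)v, w₁ = w − w₀. Then the second derivative of s ↦ ‖u₀(s)‖² at s = 0 equals (2/‖v‖²)·(⟨u₁,w₁⟩² − ‖w₁‖²‖u₀‖² − 2⟨u₀,w₀⟩⟨u₁,w₁⟩). -/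
/-!
Along the line `s ↦ v + s • w` the squared norm of the projection is the quotient
`⟪u, v + s • w⟫ ^ 2 / ‖v + s • w‖ ^ 2` of two quadratics in `s`; applying the quotient rule twice
and expanding the orthogonal decompositions `u = u₀ + u₁`, `w = w₀ + w₁` gives the formula.
-/

open RealInnerProductSpace Filter Topology

theorem hasDerivAt_deriv_div {𝕜 : Type*} [NontriviallyNormedField 𝕜]
    {g h g' h' : 𝕜 → 𝕜} {g'' h'' x : 𝕜}
    (hg : ∀ᶠ y in 𝓝 x, HasDerivAt g (g' y) y) (hh : ∀ᶠ y in 𝓝 x, HasDerivAt h (h' y) y)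
    (hg' : HasDerivAt g' g'' x) (hh' : HasDerivAt h' h'' x) (hx : h x ≠ 0) :
    HasDerivAt (deriv fun y => g y / h y)
      ((g'' * h x - g x * h'') / h x ^ 2 - 2 * h' x * (g' x * h x - g x * h' x) / h x ^ 3) x := by
  have hgx := hg.self_of_nhds
  have hhx := hh.self_of_nhds
  have hne : ∀ᶠ y in 𝓝 x, h y ≠ 0 := hhx.continuousAt.eventually_ne hx
  have hderiv : (deriv fun y => g y / h y) =ᶠ[𝓝 x]
      fun y => (g' y * h y - g y * h' y) / h y ^ 2 := by
    filter_upwards [hg, hh, hne] with y hgy hhy hy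
    exact (hgy.fun_div hhy hy).deriv
  refine HasDerivAt.congr_of_eventuallyEq ?_ hderiv
  refine (((hg'.fun_mul hhx).fun_sub (hgx.fun_mul hh')).fun_div (hhx.fun_pow 2)
    (pow_ne_zero 2 hx)).congr_deriv ?_
  field_simp
  ring

section InnerProductSpace

variable {V : Type*} [NormedAddCommGroup V] [InnerProductSpace ℝ V]

theorem inner_div_norm_sq_smul_div_norm_sq_smul (a b : ℝ) (v : V) :
    ⟪(a / ‖v‖ ^ 2) • v, (b / ‖v‖ ^ 2) • v⟫ = a * b / ‖v‖ ^ 2 := by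
  rcases eq_or_ne v 0 with rfl | hv
  · simp
  · rw [real_inner_smul_left, real_inner_smul_right, real_inner_self_eq_norm_sq]
    field_simp

theorem norm_div_norm_sq_smul_sq (a : ℝ) (v : V) :
    ‖(a / ‖v‖ ^ 2) • v‖ ^ 2 = a ^ 2 / ‖v‖ ^ 2 := by
  rw [← real_inner_self_eq_norm_sq, inner_div_norm_sq_smul_div_norm_sq_smul, ← sq]

theorem inner_sub_proj_sub_proj (u v w : V) :
    ⟪u - (⟪u, v⟫ / ‖v‖ ^ 2) • v, w - (⟪v, w⟫ / ‖v‖ ^ 2) • v⟫ =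
      ⟪u, w⟫ - ⟪u, v⟫ * ⟪v, w⟫ / ‖v‖ ^ 2 := by
  rw [inner_sub_left, inner_sub_right, inner_sub_right, inner_div_norm_sq_smul_div_norm_sq_smul,
    real_inner_smul_left, real_inner_smul_right]
  ring

theorem norm_sub_proj_sq (v w : V) :
    ‖w - (⟪v, w⟫ / ‖v‖ ^ 2) • v‖ ^ 2 = ‖w‖ ^ 2 - ⟪v, w⟫ ^ 2 / ‖v‖ ^ 2 := by
  have := inner_sub_proj_sub_proj w v w
  rw [real_inner_comm v w] at this
  rw [← real_inner_self_eq_norm_sq, this, real_inner_self_eq_norm_sq, ← sq]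

theorem hasDerivAt_add_smul (v w : V) (s : ℝ) : HasDerivAt (fun s : ℝ => v + s • w) w s := by
  simpa using ((hasDerivAt_id s).smul_const w).const_add v

theorem hasDerivAt_inner_add_smul (u v w : V) (s : ℝ) :
    HasDerivAt (fun s : ℝ => ⟪u, v + s • w⟫) ⟪u, w⟫ s := by
  simpa using (hasDerivAt_const s u).inner ℝ (hasDerivAt_add_smul v w s)

end InnerProductSpace

/-- For `v ≠ 0`, let `u₀(s)` be the orthogonal projection of `u` onto the line
spanned by `v + s w`. Writing `u₀ = u₀(0)`, `u₁ = u - u₀`,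
`w₀ = (⟨v,w⟩/‖v‖²) v` and `w₁ = w - w₀`, the second derivative of
`s ↦ ‖u₀(s)‖²` at `s = 0` is
`(2/‖v‖²) (⟨u₁,w₁⟩² - ‖w₁‖² ‖u₀‖² - 2 ⟨u₀,w₀⟩ ⟨u₁,w₁⟩)`. -/
theorem stmt_8 {V : Type*} [NormedAddCommGroup V] [InnerProductSpace ℝ V]
    (u v w : V) (hv : v ≠ 0) :
    deriv (deriv (fun s : ℝ =>
        ‖(⟪u, v + s • w⟫ / ‖v + s • w‖ ^ 2) • (v + s • w)‖ ^ 2)) 0 =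
      (2 / ‖v‖ ^ 2) *
        (⟪u - (⟪u, v⟫ / ‖v‖ ^ 2) • v, w - (⟪v, w⟫ / ‖v‖ ^ 2) • v⟫ ^ 2 -
          ‖w - (⟪v, w⟫ / ‖v‖ ^ 2) • v‖ ^ 2 * ‖(⟪u, v⟫ / ‖v‖ ^ 2) • v‖ ^ 2 -
          2 * ⟪(⟪u, v⟫ / ‖v‖ ^ 2) • v, (⟪v, w⟫ / ‖v‖ ^ 2) • v⟫ *
            ⟪u - (⟪u, v⟫ / ‖v‖ ^ 2) • v, w - (⟪v, w⟫ / ‖v‖ ^ 2) • v⟫) := by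
  have hB : ‖v‖ ^ 2 ≠ 0 := by positivity
  have hnum (s : ℝ) : HasDerivAt (fun s : ℝ => ⟪u, v + s • w⟫ ^ 2)
      (2 * ⟪u, v + s • w⟫ * ⟪u, w⟫) s :=
    ((hasDerivAt_inner_add_smul u v w s).fun_pow 2).congr_deriv (by ring)
  have hden (s : ℝ) : HasDerivAt (fun s : ℝ => ‖v + s • w‖ ^ 2) (2 * ⟪v + s • w, w⟫) s :=
    (hasDerivAt_add_smul v w s).norm_sq
  have hnum' := ((hasDerivAt_inner_add_smul u v w 0).const_mul 2).mul_const ⟪u, w⟫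
  have hden' := ((hasDerivAt_add_smul v w 0).inner ℝ (hasDerivAt_const 0 w)).const_mul 2
  have key := hasDerivAt_deriv_div (.of_forall hnum) (.of_forall hden) hnum' hden' (by simpa using hB)
  simp_rw [norm_div_norm_sq_smul_sq]
  rw [key.deriv, inner_sub_proj_sub_proj, norm_sub_proj_sq, inner_div_norm_sq_smul_div_norm_sq_smul]
  simp only [zero_smul, add_zero, inner_zero_right, zero_add, real_inner_self_eq_norm_sq]
  field_simp
  ring
end

section
/- Let A(z) = B(z) = −√(1+z²), and define α(z) = (z²·A''(z) + 6(A(z) − B(z)) − 4z(A'(z) − B'(z)))/z², β(z) = (z·A'(z) − 2(A(z) − B(z)))/z², γ(z) = B''(z), δ(z) = B'(z)/z. Then for every z > 0: β(z) < 0, γ(z) < 0, δ(z) < 0, and α(z) + δ(z) < 2√(β(z)·γ(z)). -/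
/-- `α(z) = (z² A''(z) + 6(A(z) - B(z)) - 4z(A'(z) - B'(z)))/z²`. -/
noncomputable def mtwAlpha (A B : ℝ → ℝ) (z : ℝ) : ℝ :=
  (z ^ 2 * deriv (deriv A) z + 6 * (A z - B z) -
    4 * z * (deriv A z - deriv B z)) / z ^ 2

/-- `β(z) = (z A'(z) - 2(A(z) - B(z)))/z²`. -/
noncomputable def mtwBeta (A B : ℝ → ℝ) (z : ℝ) : ℝ :=
  (z * deriv A z - 2 * (A z - B z)) / z ^ 2

/-- `γ(z) = B''(z)`. -/
noncomputable def mtwGamma (B : ℝ → ℝ) (z : ℝ) : ℝ :=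
  deriv (deriv B) z

/-- `δ(z) = B'(z)/z`. -/
noncomputable def mtwDelta (B : ℝ → ℝ) (z : ℝ) : ℝ :=
  deriv B z / z

/-!
When `A = B` the terms in `A - B` vanish, so `α = γ` and `β = δ`. For `A = -√(1 + z²)` one
has `A'(z) = -z/√(1 + z²)` and `A''(z) = -1/√(1 + z²)³`, so `γ` and `δ` are negative for
`z > 0`; then `α + δ = γ + δ < 0 ≤ 2√(βγ)`.
-/

lemma mtwAlpha_self (A : ℝ → ℝ) {z : ℝ} (hz : z ≠ 0) : mtwAlpha A A z = mtwGamma A z := by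
  simp only [mtwAlpha, mtwGamma, sub_self]
  field_simp
  ring

lemma mtwBeta_self (A : ℝ → ℝ) (z : ℝ) : mtwBeta A A z = mtwDelta A z := by
  rcases eq_or_ne z 0 with rfl | hz
  · simp [mtwBeta, mtwDelta]
  · simp only [mtwBeta, mtwDelta, sub_self, mul_zero, sub_zero]
    field_simp

lemma hasDerivAt_sqrt_one_add_sq (y : ℝ) :
    HasDerivAt (fun x => Real.sqrt (1 + x ^ 2)) (y / Real.sqrt (1 + y ^ 2)) y := by
  refine (((hasDerivAt_pow 2 y).const_add 1).sqrt (by positivity)).congr_deriv ?_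
  field_simp
  ring

lemma deriv_neg_sqrt_one_add_sq :
    deriv (fun x => -Real.sqrt (1 + x ^ 2)) = fun y => -(y / Real.sqrt (1 + y ^ 2)) :=
  funext fun y => (hasDerivAt_sqrt_one_add_sq y).neg.deriv

lemma hasDerivAt_div_sqrt_one_add_sq (y : ℝ) :
    HasDerivAt (fun x => x / Real.sqrt (1 + x ^ 2)) (1 / Real.sqrt (1 + y ^ 2) ^ 3) y := by
  have hs : 0 < Real.sqrt (1 + y ^ 2) := by positivity
  refine ((hasDerivAt_id' y).fun_div (hasDerivAt_sqrt_one_add_sq y) hs.ne').congr_deriv ?_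
  field_simp
  rw [Real.sq_sqrt (by positivity)]
  ring

lemma deriv_deriv_neg_sqrt_one_add_sq :
    deriv (deriv fun x => -Real.sqrt (1 + x ^ 2)) =
      fun y => -(1 / Real.sqrt (1 + y ^ 2) ^ 3) := by
  rw [deriv_neg_sqrt_one_add_sq]
  exact funext fun y => (hasDerivAt_div_sqrt_one_add_sq y).neg.deriv

/-- For `A = B = -√(1+z²)` (the functions associated to the cost `-cosh∘d`
on a space form of curvature `-1`), the quantities `β, γ, δ` are strictly
negative and `α + δ < 2√(βγ)` for all `z > 0`. -/
theorem stmt_10 :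
    ∀ z : ℝ, 0 < z →
      mtwBeta (fun y => -Real.sqrt (1 + y ^ 2)) (fun y => -Real.sqrt (1 + y ^ 2)) z < 0 ∧
      mtwGamma (fun y => -Real.sqrt (1 + y ^ 2)) z < 0 ∧
      mtwDelta (fun y => -Real.sqrt (1 + y ^ 2)) z < 0 ∧
      mtwAlpha (fun y => -Real.sqrt (1 + y ^ 2)) (fun y => -Real.sqrt (1 + y ^ 2)) z +
          mtwDelta (fun y => -Real.sqrt (1 + y ^ 2)) z <
        2 * Real.sqrt
          (mtwBeta (fun y => -Real.sqrt (1 + y ^ 2)) (fun y => -Real.sqrt (1 + y ^ 2)) z *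
            mtwGamma (fun y => -Real.sqrt (1 + y ^ 2)) z) := by
  intro z hz
  have hγ : mtwGamma (fun y => -Real.sqrt (1 + y ^ 2)) z < 0 := by
    rw [mtwGamma, deriv_deriv_neg_sqrt_one_add_sq, neg_neg_iff_pos]
    positivity
  have hδ : mtwDelta (fun y => -Real.sqrt (1 + y ^ 2)) z < 0 := by
    rw [mtwDelta, deriv_neg_sqrt_one_add_sq, neg_div, neg_neg_iff_pos]
    positivity
  rw [mtwAlpha_self _ hz.ne', mtwBeta_self]
  refine ⟨hδ, hγ, hδ, ?_⟩
  exact (add_neg hγ hδ).trans_le (by positivity)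
end

section
/- Let A(z) = −(1−z²)/2 and B(z) = −(1+z²)/2, and define α(z) = (z²·A''(z) + 6(A(z) − B(z)) − 4z(A'(z) − B'(z)))/z², β(z) = (z·A'(z) − 2(A(z) − B(z)))/z², γ(z) = B''(z), δ(z) = B'(z)/z. Then for every z > 0: α(z) = β(z) = γ(z) = δ(z) = −1, and in particular α(z) + δ(z) < 2√(β(z)·γ(z)). -/
section EvenQuadratic

variable (a₀ a₂ b₀ b₂ : ℝ) {z : ℝ}

theorem deriv_const_add_mul_sq : deriv (fun y : ℝ => a₀ + a₂ * y ^ 2) = fun y => 2 * a₂ * y := by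
  funext y
  convert ((hasDerivAt_pow 2 y).const_mul a₂).const_add a₀ |>.deriv using 1
  ring

theorem deriv_deriv_const_add_mul_sq :
    deriv (deriv (fun y : ℝ => a₀ + a₂ * y ^ 2)) = fun _ => 2 * a₂ := by
  rw [deriv_const_add_mul_sq]
  funext y
  simp

theorem mtwAlpha_const_add_mul_sq (hz : z ≠ 0) :
    mtwAlpha (fun y => a₀ + a₂ * y ^ 2) (fun y => b₀ + b₂ * y ^ 2) z =
      2 * b₂ + 6 * (a₀ - b₀) / z ^ 2 := by
  rw [mtwAlpha, deriv_deriv_const_add_mul_sq, deriv_const_add_mul_sq, deriv_const_add_mul_sq]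
  field_simp
  ring

theorem mtwBeta_const_add_mul_sq (hz : z ≠ 0) :
    mtwBeta (fun y => a₀ + a₂ * y ^ 2) (fun y => b₀ + b₂ * y ^ 2) z =
      2 * b₂ - 2 * (a₀ - b₀) / z ^ 2 := by
  rw [mtwBeta, deriv_const_add_mul_sq]
  field_simp
  ring

theorem mtwGamma_const_add_mul_sq : mtwGamma (fun y => b₀ + b₂ * y ^ 2) z = 2 * b₂ := by
  rw [mtwGamma, deriv_deriv_const_add_mul_sq]

theorem mtwDelta_const_add_mul_sq (hz : z ≠ 0) :
    mtwDelta (fun y => b₀ + b₂ * y ^ 2) z = 2 * b₂ := by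
  rw [mtwDelta, deriv_const_add_mul_sq]
  field_simp

end EvenQuadratic

/-- For `A(z) = -(1-z²)/2` and `B(z) = -(1+z²)/2` (the functions associated
to the cost `-log∘(1+cosh)∘d` on a space form of curvature `-1`), the
quantities `α, β, γ, δ` are all equal to `-1` for `z > 0`, and in particular
`α + δ < 2√(βγ)`. -/
theorem stmt_12 :
    ∀ z : ℝ, 0 < z →
      mtwAlpha (fun y => -(1 - y ^ 2) / 2) (fun y => -(1 + y ^ 2) / 2) z = -1 ∧
      mtwBeta (fun y => -(1 - y ^ 2) / 2) (fun y => -(1 + y ^ 2) / 2) z = -1 ∧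
      mtwGamma (fun y => -(1 + y ^ 2) / 2) z = -1 ∧
      mtwDelta (fun y => -(1 + y ^ 2) / 2) z = -1 ∧
      mtwAlpha (fun y => -(1 - y ^ 2) / 2) (fun y => -(1 + y ^ 2) / 2) z +
          mtwDelta (fun y => -(1 + y ^ 2) / 2) z <
        2 * Real.sqrt
          (mtwBeta (fun y => -(1 - y ^ 2) / 2) (fun y => -(1 + y ^ 2) / 2) z *
            mtwGamma (fun y => -(1 + y ^ 2) / 2) z) := by
  intro z hz
  have hA : (fun y : ℝ => -(1 - y ^ 2) / 2) = fun y => -1 / 2 + 1 / 2 * y ^ 2 := by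
    funext y; ring
  have hB : (fun y : ℝ => -(1 + y ^ 2) / 2) = fun y => -1 / 2 + -1 / 2 * y ^ 2 := by
    funext y; ring
  rw [hA, hB, mtwAlpha_const_add_mul_sq _ _ _ _ hz.ne', mtwBeta_const_add_mul_sq _ _ _ _ hz.ne',
    mtwGamma_const_add_mul_sq, mtwDelta_const_add_mul_sq _ _ hz.ne']
  norm_num
end
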